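/- Let L be an infinite locally compact Hausdorff topological space and let 𝒜 be a somewhat regular closed linear subspace of C₀(L). Then for every real number ε with 0 < ε < 1 there exists a linear map S from the space c₀ (of real sequences converging to 0, with the supremum norm) into 𝒜 such that (1 − ε)‖a‖ ≤ ‖Sa‖ ≤ (1 + ε)‖a‖ for every a ∈ c₀; in particular, S is an ε-isometry from c₀ onto the closed linear subspace S(c₀) of 𝒜. -/

import Mathlib

/-!
Choose pairwise disjoint nonempty open sets `U n` (they exist in every infinite Hausdorff space)
and, by somewhat regularity, `f n ∈ 𝒜` with `‖f n‖ = 1` and `|f n| ≤ δ n` off `U n`, where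
`∑ δ n = ε`. At every point at most one `f n` is large, so `∑ |f n x| ≤ 1 + ε`; hence
`S a = ∑ a n • f n` converges, lies in the closed subspace `𝒜`, and `‖S a‖ ≤ (1 + ε) ‖a‖`.
Conversely, on `U n` the function `S a - a n • f n` is bounded by `ε ‖a‖`, and so is `a n • f n`
off `U n`; thus `|a n| ≤ ‖S a‖ + ε ‖a‖` for every `n`, i.e. `(1 - ε) ‖a‖ ≤ ‖S a‖`.
-/

open scoped ZeroAtInfty

/-- A linear subspace `𝒜` of `C₀(L, ℝ)` is *somewhat regular* if for every non-empty open
subset `V` of `L` and every `ε` with `0 < ε < 1` there is `f ∈ 𝒜` with `‖f‖ = 1` and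
`|f x| ≤ ε` for every `x ∈ L \ V`. -/
def SomewhatRegular {L : Type*} [TopologicalSpace L]
    (𝒜 : Submodule ℝ C₀(L, ℝ)) : Prop :=
  ∀ V : Set L, IsOpen V → V.Nonempty → ∀ ε : ℝ, 0 < ε → ε < 1 →
    ∃ f ∈ 𝒜, ‖f‖ = 1 ∧ ∀ x ∉ V, |f x| ≤ ε

open Filter Function Topology

namespace ZeroAtInftyContinuousMap

variable {α β : Type*} [TopologicalSpace α] [SeminormedAddCommGroup β]

def evalAddMonoidHom (x : α) : C₀(α, β) →+ β where
  toFun g := g x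
  map_zero' := rfl
  map_add' _ _ := rfl

theorem continuous_evalAddMonoidHom (x : α) :
    Continuous (evalAddMonoidHom x : C₀(α, β) → β) :=
  (continuous_apply x).comp
    (BoundedContinuousFunction.continuous_coe.comp isometry_toBCF.continuous)

theorem finset_sum_apply {ι : Type*} (s : Finset ι) (f : ι → C₀(α, β)) (x : α) :
    (∑ i ∈ s, f i) x = ∑ i ∈ s, f i x :=
  map_sum (evalAddMonoidHom x) f s

theorem hasSum_apply {ι : Type*} {f : ι → C₀(α, β)} {g : C₀(α, β)} (h : HasSum f g) (x : α) :
    HasSum (fun i ↦ f i x) (g x) :=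
  h.map (evalAddMonoidHom x) (continuous_evalAddMonoidHom x)

theorem norm_apply_le (f : C₀(α, β)) (x : α) : ‖f x‖ ≤ ‖f‖ :=
  f.toBCF.norm_coe_le_norm x

theorem norm_le_iff {f : C₀(α, β)} {C : ℝ} (hC : 0 ≤ C) : ‖f‖ ≤ C ↔ ∀ x, ‖f x‖ ≤ C :=
  BoundedContinuousFunction.norm_le hC

theorem tendsto_atTop_zero (a : C₀(ℕ, β)) : Tendsto a atTop (𝓝 0) := by
  simpa [cocompact_eq_atTop] using zero_at_infty a

end ZeroAtInftyContinuousMap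

open ZeroAtInftyContinuousMap

section Series

variable {L : Type*} [TopologicalSpace L] {f : ℕ → C₀(L, ℝ)} {C : ℝ}

theorem norm_sum_smul_le_of_sum_norm_apply_le (hC : ∀ x (t : Finset ℕ), ∑ n ∈ t, ‖f n x‖ ≤ C)
    (hC₀ : 0 ≤ C) {a : ℕ → ℝ} {M : ℝ} (hM : 0 ≤ M) {t : Finset ℕ} (ha : ∀ n ∈ t, ‖a n‖ ≤ M) :
    ‖∑ n ∈ t, a n • f n‖ ≤ M * C := by
  refine (norm_le_iff (mul_nonneg hM hC₀)).2 fun x ↦ ?_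
  calc ‖(∑ n ∈ t, a n • f n) x‖ ≤ ∑ n ∈ t, ‖a n‖ * ‖f n x‖ := by
        rw [finset_sum_apply]
        refine (norm_sum_le _ _).trans_eq (Finset.sum_congr rfl fun n _ ↦ ?_)
        rw [coe_smul, Pi.smul_apply, norm_smul]
    _ ≤ ∑ n ∈ t, M * ‖f n x‖ := Finset.sum_le_sum fun n hn ↦ by gcongr; exact ha n hn
    _ = M * ∑ n ∈ t, ‖f n x‖ := (Finset.mul_sum ..).symm
    _ ≤ M * C := by gcongr; exact hC x t

theorem summable_smul_of_sum_norm_apply_le (hC : ∀ x (t : Finset ℕ), ∑ n ∈ t, ‖f n x‖ ≤ C)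
    (hC₀ : 0 ≤ C) (a : C₀(ℕ, ℝ)) : Summable fun n ↦ a n • f n := by
  refine summable_iff_vanishing_norm.2 fun η hη ↦ ?_
  have hM : 0 < η / (C + 1) := by positivity
  obtain ⟨N, hN⟩ := eventually_atTop.1
    ((tendsto_atTop_zero a).eventually (Metric.closedBall_mem_nhds 0 hM))
  refine ⟨Finset.range N, fun t ht ↦ ?_⟩
  have ha : ∀ n ∈ t, ‖a n‖ ≤ η / (C + 1) := fun n hn ↦ by
    simpa using hN n <| not_lt.1 fun hnN ↦
      Finset.disjoint_left.1 ht hn (Finset.mem_range.2 hnN)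
  calc ‖∑ n ∈ t, a n • f n‖ ≤ η / (C + 1) * C :=
        norm_sum_smul_le_of_sum_norm_apply_le hC hC₀ hM.le ha
    _ < η := by
      rw [div_mul_eq_mul_div, div_lt_iff₀ (by positivity)]
      nlinarith

theorem norm_tsum_smul_le_of_sum_norm_apply_le (hC : ∀ x (t : Finset ℕ), ∑ n ∈ t, ‖f n x‖ ≤ C)
    (hC₀ : 0 ≤ C) (a : C₀(ℕ, ℝ)) : ‖∑' n, a n • f n‖ ≤ C * ‖a‖ :=
  le_of_tendsto' (summable_smul_of_sum_norm_apply_le hC hC₀ a).hasSum.norm fun _ ↦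
    (norm_sum_smul_le_of_sum_norm_apply_le hC hC₀ (norm_nonneg a)
      fun n _ ↦ norm_apply_le a n).trans_eq (mul_comm _ _)

end Series

noncomputable def tsumSMulLinearMap {E : Type*} [AddCommMonoid E] [Module ℝ E]
    [TopologicalSpace E] [ContinuousAdd E] [ContinuousConstSMul ℝ E] [T2Space E] (f : ℕ → E)
    (hf : ∀ a : C₀(ℕ, ℝ), Summable fun n ↦ a n • f n) : C₀(ℕ, ℝ) →ₗ[ℝ] E where
  toFun a := ∑' n, a n • f n
  map_add' a b := by
    simpa only [coe_add, Pi.add_apply, add_smul] using (hf a).tsum_add (hf b)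
  map_smul' c a := by
    simpa only [coe_smul, Pi.smul_apply, smul_eq_mul, mul_smul, RingHom.id_apply] using
      (hf a).tsum_const_smul c

structure IsNearlyDisjointUnitSeq {L : Type*} [TopologicalSpace L] (f : ℕ → C₀(L, ℝ))
    (U : ℕ → Set L) (δ : ℕ → ℝ) : Prop where
  pairwise_disjoint : Pairwise (Disjoint on U)
  norm_eq_one : ∀ n, ‖f n‖ = 1
  norm_apply_le_of_notMem : ∀ n, ∀ x ∉ U n, ‖f n x‖ ≤ δ n
  nonneg : 0 ≤ δ

namespace IsNearlyDisjointUnitSeq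

variable {L : Type*} [TopologicalSpace L] {f : ℕ → C₀(L, ℝ)} {U : ℕ → Set L} {δ : ℕ → ℝ} {η : ℝ}

theorem sum_norm_apply_le (h : IsNearlyDisjointUnitSeq f U δ) (hδ : HasSum δ η) (x : L)
    (t : Finset ℕ) : ∑ n ∈ t, ‖f n x‖ ≤ 1 + η := by
  have hterm : ∀ n, ‖f n x‖ ≤ (U n).indicator 1 x + δ n := fun n ↦ by
    by_cases hx : x ∈ U n
    · simpa [hx, ← h.norm_eq_one n] using
        (norm_apply_le (f n) x).trans (le_add_of_nonneg_right (h.nonneg n))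
    · simpa [hx] using h.norm_apply_le_of_notMem n x hx
  calc ∑ n ∈ t, ‖f n x‖ ≤ ∑ n ∈ t, ((U n).indicator 1 x + δ n) :=
        Finset.sum_le_sum fun n _ ↦ hterm n
    _ = (⋃ n ∈ t, U n).indicator 1 x + ∑ n ∈ t, δ n := by
      rw [Finset.sum_add_distrib,
        Finset.indicator_biUnion_apply _ _ (h.pairwise_disjoint.set_pairwise _)]
    _ ≤ 1 + η := add_le_add (Set.indicator_apply_le' (fun _ ↦ le_rfl) fun _ ↦ zero_le_one)
      (sum_le_hasSum t (fun n _ ↦ h.nonneg n) hδ)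

theorem summable_smul (h : IsNearlyDisjointUnitSeq f U δ) (hδ : HasSum δ η) (a : C₀(ℕ, ℝ)) :
    Summable fun n ↦ a n • f n :=
  summable_smul_of_sum_norm_apply_le (h.sum_norm_apply_le hδ)
    (by linarith [hδ.nonneg h.nonneg]) a

theorem norm_tsum_smul_le (h : IsNearlyDisjointUnitSeq f U δ) (hδ : HasSum δ η) (a : C₀(ℕ, ℝ)) :
    ‖∑' n, a n • f n‖ ≤ (1 + η) * ‖a‖ :=
  norm_tsum_smul_le_of_sum_norm_apply_le (h.sum_norm_apply_le hδ)
    (by linarith [hδ.nonneg h.nonneg]) a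

theorem norm_tsum_smul_apply_sub_le (h : IsNearlyDisjointUnitSeq f U δ) (hδ : HasSum δ η)
    (a : C₀(ℕ, ℝ)) {n : ℕ} {x : L} (hx : x ∈ U n) :
    ‖(∑' m, a m • f m) x - a n * f n x‖ ≤ ‖a‖ * η := by
  classical
  have hsum := hasSum_ite_sub_hasSum (hasSum_apply (h.summable_smul hδ a).hasSum x) n
  refine hsum.norm_le_of_bounded (hδ.mul_left ‖a‖) fun m ↦ ?_
  by_cases hmn : m = n
  · simpa [hmn] using mul_nonneg (norm_nonneg a) (h.nonneg n)
  · have hxm : x ∉ U m := fun hxm ↦ (h.pairwise_disjoint hmn).notMem_of_mem_right hx hxm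
    simp only [hmn, if_false, coe_smul, Pi.smul_apply, smul_eq_mul, norm_mul]
    exact mul_le_mul (norm_apply_le a m) (h.norm_apply_le_of_notMem m x hxm) (norm_nonneg _)
      (norm_nonneg a)

theorem norm_apply_le_norm_tsum_smul_add (h : IsNearlyDisjointUnitSeq f U δ) (hδ : HasSum δ η)
    (a : C₀(ℕ, ℝ)) (n : ℕ) : ‖a n‖ ≤ ‖∑' m, a m • f m‖ + ‖a‖ * η := by
  set F := ∑' m, a m • f m
  have hη : 0 ≤ η := hδ.nonneg h.nonneg
  have hpointwise : ∀ x, ‖(a n • f n) x‖ ≤ ‖F‖ + ‖a‖ * η := fun x ↦ by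
    rw [coe_smul, Pi.smul_apply, smul_eq_mul]
    by_cases hx : x ∈ U n
    · calc ‖a n * f n x‖ ≤ ‖F x‖ + ‖F x - a n * f n x‖ := norm_le_insert _ _
        _ ≤ ‖F‖ + ‖a‖ * η :=
          add_le_add (norm_apply_le F x) (h.norm_tsum_smul_apply_sub_le hδ a hx)
    · calc ‖a n * f n x‖ ≤ ‖a‖ * δ n := by
            rw [norm_mul]
            exact mul_le_mul (norm_apply_le a n) (h.norm_apply_le_of_notMem n x hx)
              (norm_nonneg _) (norm_nonneg a)
        _ ≤ ‖a‖ * η := by gcongr; exact le_hasSum hδ n fun m _ ↦ h.nonneg m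
        _ ≤ ‖F‖ + ‖a‖ * η := le_add_of_nonneg_left (norm_nonneg F)
  simpa [norm_smul, h.norm_eq_one] using (norm_le_iff (by positivity)).2 hpointwise

theorem one_sub_mul_norm_le_norm_tsum_smul (h : IsNearlyDisjointUnitSeq f U δ) (hδ : HasSum δ η)
    (a : C₀(ℕ, ℝ)) : (1 - η) * ‖a‖ ≤ ‖∑' n, a n • f n‖ := by
  have hη : 0 ≤ η := hδ.nonneg h.nonneg
  have : ‖a‖ ≤ ‖∑' n, a n • f n‖ + ‖a‖ * η :=
    (norm_le_iff (by positivity)).2 (h.norm_apply_le_norm_tsum_smul_add hδ a)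
  linarith

end IsNearlyDisjointUnitSeq

theorem somewhat_regular_contains_c0_general
    {L : Type*} [TopologicalSpace L] [T2Space L] [Infinite L]
    (𝒜 : Submodule ℝ C₀(L, ℝ)) (hclosed : IsClosed (𝒜 : Set C₀(L, ℝ)))
    (h𝒜 : SomewhatRegular 𝒜)
    (ε : ℝ) (hε0 : 0 < ε) (hε1 : ε < 1) :
    ∃ S : C₀(ℕ, ℝ) →ₗ[ℝ] 𝒜,
      ∀ a : C₀(ℕ, ℝ), (1 - ε) * ‖a‖ ≤ ‖S a‖ ∧ ‖S a‖ ≤ (1 + ε) * ‖a‖ := by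
  obtain ⟨U, hU_inf, hU_open, hU_disj⟩ := exists_seq_infinite_isOpen_pairwise_disjoint L
  set δ : ℕ → ℝ := fun n ↦ ε / 2 / 2 ^ n
  have hδ : HasSum δ ε := hasSum_geometric_two' ε
  have hδ_pos : ∀ n, 0 < δ n := fun n ↦ by positivity
  have hδ_lt_one : ∀ n, δ n < 1 := fun n ↦
    (div_le_self (by positivity) (one_le_pow₀ one_le_two)).trans_lt (by linarith)
  choose f hf𝒜 hf_norm hf_small using fun n ↦
    h𝒜 (U n) (hU_open n) (hU_inf n).nonempty (δ n) (hδ_pos n) (hδ_lt_one n)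
  have hf : IsNearlyDisjointUnitSeq f U δ :=
    ⟨hU_disj, hf_norm, fun n x hx ↦ (Real.norm_eq_abs _).trans_le (hf_small n x hx),
      fun n ↦ (hδ_pos n).le⟩
  have hS𝒜 : ∀ a, tsumSMulLinearMap f (hf.summable_smul hδ) a ∈ 𝒜 := fun a ↦
    hclosed.mem_of_tendsto (hf.summable_smul hδ a).hasSum
      (Eventually.of_forall fun t ↦ 𝒜.sum_mem fun n _ ↦ 𝒜.smul_mem _ (hf𝒜 n))
  exact ⟨(tsumSMulLinearMap f _).codRestrict 𝒜 hS𝒜, fun a ↦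
    ⟨hf.one_sub_mul_norm_le_norm_tsum_smul hδ a, hf.norm_tsum_smul_le hδ a⟩⟩

/-- A somewhat regular closed linear subspace `𝒜` of `C₀(L)` contains, for every
`0 < ε < 1`, an `ε`-isometric copy of `c₀` (realized here as `C₀(ℕ, ℝ)`, the space of real
sequences converging to `0` with the supremum norm): there is a linear map `S : c₀ → 𝒜`
with `(1 - ε)‖a‖ ≤ ‖S a‖ ≤ (1 + ε)‖a‖` for every `a ∈ c₀`; in particular `S` is an
`ε`-isometry from `c₀` onto its (closed) range in `𝒜`. -/
theorem somewhat_regular_contains_c0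
    {L : Type*} [TopologicalSpace L] [LocallyCompactSpace L] [T2Space L] [Infinite L]
    (𝒜 : Submodule ℝ C₀(L, ℝ)) (hclosed : IsClosed (𝒜 : Set C₀(L, ℝ)))
    (h𝒜 : SomewhatRegular 𝒜)
    (ε : ℝ) (hε0 : 0 < ε) (hε1 : ε < 1) :
    ∃ S : C₀(ℕ, ℝ) →ₗ[ℝ] 𝒜,
      ∀ a : C₀(ℕ, ℝ), (1 - ε) * ‖a‖ ≤ ‖S a‖ ∧ ‖S a‖ ≤ (1 + ε) * ‖a‖ :=
  somewhat_regular_contains_c0_general 𝒜 hclosed h𝒜 ε hε0 hε1
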